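/- Let m, U, P ≥ 1. Let Ψ, Ξ ∈ ℂ^{m×(Um)} with u-th block columns Ψ_u, Ξ_u ∈ ℂ^{m×m}, let c ∈ ℂ^m, let r_0, …, r_{P−1} ∈ ℂ^m and μ_0, …, μ_{P−1} ∈ ℂ^U, and let Σ_X ∈ ℂ^{U×U} be Hermitian. For ν ∈ ℝ^U define Υ(ν) := Ψ + Ξ(diag{ν} ⊗ I_m) and L(ν) := Σ_{p=0}^{P−1} ‖r_p − Υ(ν)(μ_p ⊗ c)‖₂² + P·Tr{(I_U ⊗ c)^H Υ(ν)^H Υ(ν)(I_U ⊗ c) Σ_X}. Then L(ν) is real-valued and L(ν) = ν^T H ν − 2 z^T ν + L(0) for all ν ∈ ℝ^U, where H ∈ ℝ^{U×U} has entries H_{u,m'} = Re{(P·Σ_{X,u,m'} + Σ_{p=0}^{P−1} conj(μ_{p,m'}) μ_{p,u}) · c^H Ξ_{m'}^H Ξ_u c} and z ∈ ℝ^U has entries z_u = Σ_{p=0}^{P−1} Re{[r_p − Ψ(μ_p ⊗ c)]^H Ξ_u μ_{p,u} c} − Σ_{m'=0}^{U−1} Re{P·Σ_{X,u,m'} ·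 c^H Ψ_{m'}^H Ξ_u c}. -/
import Mathlib
open Matrix

lemma dot_sum_right {m U : ℕ} (x : Fin m → ℂ) (t : Fin U → ℂ) (b : Fin U → Fin m → ℂ) :
    x ⬝ᵥ (∑ u, t u • b u) = ∑ u, t u * (x ⬝ᵥ b u) := by
  simp only [dotProduct, Finset.sum_apply, Pi.smul_apply, smul_eq_mul, Finset.mul_sum]
  rw [Finset.sum_comm]
  exact Finset.sum_congr rfl fun u _ => Finset.sum_congr rfl fun i _ => by ring

lemma star_sum_smul {m U : ℕ} (t : Fin U → ℂ) (b : Fin U → Fin m → ℂ) :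
    star (∑ u, t u • b u) = ∑ u, (starRingEnd ℂ) (t u) • star (b u) := by
  rw [star_sum]
  exact Finset.sum_congr rfl fun u _ => by rw [star_smul]; rfl

lemma sum_dot_left {m U : ℕ} (x : Fin m → ℂ) (t : Fin U → ℂ) (b : Fin U → Fin m → ℂ) :
    (∑ u, t u • b u) ⬝ᵥ x = ∑ u, t u * (b u ⬝ᵥ x) := by
  simp only [dotProduct, Finset.sum_apply, Pi.smul_apply, smul_eq_mul, Finset.mul_sum,
    Finset.sum_mul]
  rw [Finset.sum_comm]
  exact Finset.sum_congr rfl fun u _ => Finset.sum_congr rfl fun i _ => by ring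

lemma dot_expand {m U : ℕ} (e : Fin m → ℂ) (b : Fin U → Fin m → ℂ) (t : Fin U → ℂ) :
    star (e - ∑ u, t u • b u) ⬝ᵥ (e - ∑ u, t u • b u)
    = star e ⬝ᵥ e - (∑ u, t u * (star e ⬝ᵥ b u)) - (∑ u, (starRingEnd ℂ) (t u) * (star (b u) ⬝ᵥ e))
      + ∑ u, ∑ v, (starRingEnd ℂ) (t u) * (t v * (star (b u) ⬝ᵥ b v)) := by
  have hs : star (∑ u, t u • b u) = ∑ u, (starRingEnd ℂ) (t u) • star (b u) := star_sum_smul t b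
  rw [star_sub, hs, sub_dotProduct, dotProduct_sub, dotProduct_sub, dot_sum_right, sum_dot_left,
    sum_dot_left]
  have h1 : ∀ u : Fin U, (starRingEnd ℂ) (t u) * (star (b u) ⬝ᵥ ∑ v, t v • b v)
      = ∑ v, (starRingEnd ℂ) (t u) * (t v * (star (b u) ⬝ᵥ b v)) := by
    intro u
    rw [dot_sum_right, Finset.mul_sum]
  rw [Finset.sum_congr rfl fun u _ => h1 u]
  ring

lemma dot_expand2 {m : ℕ} (a b a' b' : Fin m → ℂ) (s t : ℂ) :
    star (a + s • b) ⬝ᵥ (a' + t • b')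
    = star a ⬝ᵥ a' + t * (star a ⬝ᵥ b') + (starRingEnd ℂ) s * (star b ⬝ᵥ a')
      + (starRingEnd ℂ) s * (t * (star b ⬝ᵥ b')) := by
  rw [star_add, star_smul, add_dotProduct, dotProduct_add, dotProduct_add]
  simp only [smul_dotProduct, dotProduct_smul, smul_eq_mul, RCLike.star_def]
  ring

lemma conj_dot {n : ℕ} (x y : Fin n → ℂ) : (starRingEnd ℂ) (star x ⬝ᵥ y) = star y ⬝ᵥ x := by
  simp [dotProduct, map_sum, mul_comm]

lemma core {m U P : ℕ} (a b : Fin U → Fin m → ℂ) (e : Fin P → Fin m → ℂ)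
    (μ : Fin P → Fin U → ℂ) (Sx : Matrix (Fin U) (Fin U) ℂ)
    (hSx' : ∀ u v, (starRingEnd ℂ) (Sx u v) = Sx v u) (ν : Fin U → ℝ) :
    (∑ p, star (e p - ∑ u, (((↑(ν u):ℂ) * μ p u) • b u)) ⬝ᵥ (e p - ∑ u, (((↑(ν u):ℂ) * μ p u) • b u)))
      + (P:ℂ) * ∑ u, ∑ w, Sx w u * (star (a u + ((↑(ν u):ℂ)) • b u) ⬝ᵥ (a w + ((↑(ν w):ℂ)) • b w))
    = ((∑ p, star (e p) ⬝ᵥ e p) + (P:ℂ) * ∑ u, ∑ w, Sx w u * (star (a u) ⬝ᵥ a w))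
      - ∑ u, (↑(ν u):ℂ) * (((∑ p, μ p u * (star (e p) ⬝ᵥ b u)) - (P:ℂ) * ∑ v, Sx u v * (star (a v) ⬝ᵥ b u))
          + (starRingEnd ℂ) ((∑ p, μ p u * (star (e p) ⬝ᵥ b u)) - (P:ℂ) * ∑ v, Sx u v * (star (a v) ⬝ᵥ b u)))
      + ∑ u, ∑ v, ((↑(ν u):ℂ) * (↑(ν v):ℂ)) * (((P:ℂ) * Sx u v + ∑ p, (starRingEnd ℂ) (μ p v) * μ p u) * (star (b v) ⬝ᵥ b u)) := by
  simp only [dot_expand, dot_expand2, _root_.map_mul, Complex.conj_ofReal, _root_.map_sub, _root_.map_sum,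
    Complex.conj_natCast, conj_dot, hSx']
  simp only [mul_add, mul_sub, Finset.sum_add_distrib, Finset.sum_sub_distrib, Finset.mul_sum]
  have h2 : ∑ p, ∑ u, (↑(ν u):ℂ) * μ p u * (star (e p) ⬝ᵥ b u)
      = ∑ u, ∑ p, (↑(ν u):ℂ) * (μ p u * (star (e p) ⬝ᵥ b u)) := by
    rw [Finset.sum_comm]
    exact Finset.sum_congr rfl fun u _ => Finset.sum_congr rfl fun p _ => by ring
  have h3 : ∑ p, ∑ u, (↑(ν u):ℂ) * (starRingEnd ℂ) (μ p u) * (star (b u) ⬝ᵥ e p)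
      = ∑ u, ∑ p, (↑(ν u):ℂ) * ((starRingEnd ℂ) (μ p u) * (star (b u) ⬝ᵥ e p)) := by
    rw [Finset.sum_comm]
    exact Finset.sum_congr rfl fun u _ => Finset.sum_congr rfl fun p _ => by ring
  have h6 : ∑ u, ∑ i, (P:ℂ) * (Sx i u * ((↑(ν i):ℂ) * (star (a u) ⬝ᵥ b i)))
      = ∑ u, ∑ i, (↑(ν u):ℂ) * ((P:ℂ) * (Sx u i * (star (a i) ⬝ᵥ b u))) := by
    rw [Finset.sum_comm]
    exact Finset.sum_congr rfl fun u _ => Finset.sum_congr rfl fun i _ => by ring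
  have h7 : ∑ u, ∑ i, (P:ℂ) * (Sx i u * ((↑(ν u):ℂ) * (star (b u) ⬝ᵥ a i)))
      = ∑ u, ∑ i, (↑(ν u):ℂ) * ((P:ℂ) * (Sx i u * (star (b u) ⬝ᵥ a i))) := by
    exact Finset.sum_congr rfl fun u _ => Finset.sum_congr rfl fun i _ => by ring
  have hq : ∑ u, ∑ v, (↑(ν u):ℂ) * (↑(ν v):ℂ) * (((P:ℂ) * Sx u v + ∑ p, (starRingEnd ℂ) (μ p v) * μ p u) * (star (b v) ⬝ᵥ b u))
      = (∑ p, ∑ u, ∑ v, (↑(ν u):ℂ) * (starRingEnd ℂ) (μ p u) * ((↑(ν v):ℂ) * μ p v * (star (b u) ⬝ᵥ b v)))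
        + ∑ u, ∑ i, (P:ℂ) * (Sx i u * ((↑(ν u):ℂ) * ((↑(ν i):ℂ) * (star (b u) ⬝ᵥ b i)))) := by
    have hA : ∑ p, ∑ u, ∑ v, (↑(ν u):ℂ) * (starRingEnd ℂ) (μ p u) * ((↑(ν v):ℂ) * μ p v * (star (b u) ⬝ᵥ b v))
        = ∑ u, ∑ v, (↑(ν u):ℂ) * (↑(ν v):ℂ) * ((∑ p, (starRingEnd ℂ) (μ p v) * μ p u) * (star (b v) ⬝ᵥ b u)) := by
      rw [Finset.sum_comm]
      rw [Finset.sum_congr rfl fun u (_ : u ∈ Finset.univ) => Finset.sum_comm]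
      rw [Finset.sum_comm]
      refine Finset.sum_congr rfl fun u _ => Finset.sum_congr rfl fun v _ => ?_
      rw [mul_comm _ (star (b v) ⬝ᵥ b u), Finset.mul_sum, Finset.mul_sum]
      exact Finset.sum_congr rfl fun p _ => by ring
    have hB : ∑ u, ∑ i, (P:ℂ) * (Sx i u * ((↑(ν u):ℂ) * ((↑(ν i):ℂ) * (star (b u) ⬝ᵥ b i))))
        = ∑ u, ∑ v, (↑(ν u):ℂ) * (↑(ν v):ℂ) * ((P:ℂ) * Sx u v * (star (b v) ⬝ᵥ b u)) := by
      rw [Finset.sum_comm]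
      exact Finset.sum_congr rfl fun u _ => Finset.sum_congr rfl fun v _ => by ring
    rw [hA, hB, ← Finset.sum_add_distrib]
    refine Finset.sum_congr rfl fun u _ => ?_
    rw [← Finset.sum_add_distrib]
    exact Finset.sum_congr rfl fun v _ => by ring
  linear_combination -h2 - h3 + h6 + h7 - hq


lemma block_mulVec {m U : ℕ} (M : Matrix (Fin m) (Fin U × Fin m) ℂ)
    (Mb : Fin U → Matrix (Fin m) (Fin m) ℂ)
    (hMb : ∀ u i j, Mb u i j = M i (u,j)) (c : Fin m → ℂ) (s : Fin U → ℂ) :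
    M.mulVec (fun i => s i.1 * c i.2) = ∑ u, s u • (Mb u).mulVec c := by
  funext i
  simp only [mulVec, dotProduct, Finset.sum_apply, Pi.smul_apply, smul_eq_mul,
    Fintype.sum_prod_type, hMb, Finset.mul_sum]
  apply Finset.sum_congr rfl; intro u _
  apply Finset.sum_congr rfl; intro j _
  ring

lemma diag_mulVec {m U : ℕ} (Ξ : Matrix (Fin m) (Fin U × Fin m) ℂ) (ν : Fin U → ℝ)
    (x : Fin U × Fin m → ℂ) :
    (Ξ * Matrix.of (fun i j : Fin U × Fin m =>
        (if i.1 = j.1 then ((ν i.1 : ℝ) : ℂ) else 0) * (if i.2 = j.2 then 1 else 0))).mulVec x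
    = Ξ.mulVec (fun i => ((ν i.1 : ℝ):ℂ) * x i) := by
  rw [← Matrix.mulVec_mulVec]
  congr 1
  funext i
  simp [mulVec, dotProduct, Fintype.sum_prod_type, ite_and, mul_ite, ite_mul, zero_mul, mul_zero,
    Finset.sum_ite_eq, Finset.sum_ite_eq', Prod.ext_iff]

lemma prod_IUc {m U : ℕ} (Ψ Ξ : Matrix (Fin m) (Fin U × Fin m) ℂ) (c : Fin m → ℂ) (ν : Fin U → ℝ)
    (Ψb Ξb : Fin U → Matrix (Fin m) (Fin m) ℂ)
    (hΨb : ∀ u i j, Ψb u i j = Ψ i (u,j)) (hΞb : ∀ u i j, Ξb u i j = Ξ i (u,j))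
    (IUc : Matrix (Fin U × Fin m) (Fin U) ℂ)
    (hIUc : ∀ (i : Fin U × Fin m) (j : Fin U), IUc i j = (if i.1 = j then 1 else 0) * c i.2) :
    (Ψ + Ξ * Matrix.of (fun i j : Fin U × Fin m =>
        (if i.1 = j.1 then ((ν i.1 : ℝ) : ℂ) else 0) * (if i.2 = j.2 then 1 else 0))) * IUc
    = Matrix.of (fun i u => (Ψb u).mulVec c i + ((ν u : ℝ):ℂ) * (Ξb u).mulVec c i) := by
  ext i u
  simp only [Matrix.add_mul, Matrix.add_apply, Matrix.mul_apply, Matrix.of_apply, hIUc,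
    Fintype.sum_prod_type, hΨb, hΞb, mulVec, dotProduct, mul_ite, mul_one, mul_zero, ite_mul,
    zero_mul, Finset.sum_ite_eq, Finset.sum_ite_eq', Finset.mem_univ, if_true]
  rw [Finset.sum_comm]
  simp only [Finset.sum_ite_eq', Finset.mem_univ, if_true, one_mul, Finset.sum_add_distrib,
    Finset.mul_sum]
  rw [← Finset.sum_add_distrib]
  apply Finset.sum_congr rfl; intro j _; ring

lemma trace_gram {m U : ℕ} (W : Matrix (Fin m) (Fin U) ℂ) (Sx : Matrix (Fin U) (Fin U) ℂ) :
    (Wᴴ * W * Sx).trace = ∑ u, ∑ w, Sx w u * (star (fun i => W i u) ⬝ᵥ fun i => W i w) := by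
  simp only [Matrix.trace, Matrix.diag, Matrix.mul_apply, conjTranspose_apply, dotProduct,
    Pi.star_apply, Finset.sum_mul]
  apply Finset.sum_congr rfl; intro u _
  apply Finset.sum_congr rfl; intro w _
  rw [Finset.mul_sum]
  apply Finset.sum_congr rfl; intro i _
  ring

lemma adjoint_dot {m : ℕ} (A B : Matrix (Fin m) (Fin m) ℂ) (c : Fin m → ℂ) :
    star c ⬝ᵥ (Aᴴ * B).mulVec c = star (A.mulVec c) ⬝ᵥ B.mulVec c := by
  have lhs : star c ⬝ᵥ (Aᴴ * B).mulVec c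
      = ∑ i, ∑ j, ∑ k, star (c i) * star (A k i) * (B k j * c j) := by
    simp only [dotProduct, mulVec, Matrix.mul_apply, conjTranspose_apply, Pi.star_apply,
      Finset.mul_sum, Finset.sum_mul]
    apply Finset.sum_congr rfl; intro i _
    apply Finset.sum_congr rfl; intro j _
    apply Finset.sum_congr rfl; intro k _
    ring
  have rhs : star (A.mulVec c) ⬝ᵥ B.mulVec c
      = ∑ k, ∑ i, ∑ j, star (c i) * star (A k i) * (B k j * c j) := by
    simp only [dotProduct, mulVec, Pi.star_apply, star_sum, star_mul', Finset.mul_sum,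
      Finset.sum_mul]
    apply Finset.sum_congr rfl; intro k _
    rw [Finset.sum_comm]
    apply Finset.sum_congr rfl; intro i _
    apply Finset.sum_congr rfl; intro j _
    ring
  rw [lhs, rhs]
  rw [Finset.sum_congr rfl fun i (_ : i ∈ Finset.univ) => Finset.sum_comm]
  rw [Finset.sum_comm]

lemma selfconj_im {U : ℕ} (G : Fin U → Fin U → ℂ)
    (hG : ∀ u v, (starRingEnd ℂ) (G u v) = G v u) : (∑ u, ∑ v, G u v).im = 0 := by
  have h : (starRingEnd ℂ) (∑ u, ∑ v, G u v) = ∑ u, ∑ v, G u v := by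
    simp_rw [map_sum, hG]; exact Finset.sum_comm
  exact Complex.conj_eq_iff_im.mp h

lemma quad_real {U : ℕ} (T : Fin U → Fin U → ℂ) (hT : ∀ u v, (starRingEnd ℂ) (T u v) = T v u)
    (ν : Fin U → ℝ) :
    ∑ u, ∑ v, (((ν u : ℝ):ℂ) * ((ν v:ℝ):ℂ)) * T u v
      = ((∑ u, ∑ v, ν u * ν v * (T u v).re : ℝ) : ℂ) := by
  have h2 : ∑ u, ∑ v, (((ν u : ℝ):ℂ) * ((ν v:ℝ):ℂ)) * T u v
      = ∑ u, ∑ v, (((ν u : ℝ):ℂ) * ((ν v:ℝ):ℂ)) * (starRingEnd ℂ) (T u v) := by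
    rw [Finset.sum_comm]
    refine Finset.sum_congr rfl fun u _ => Finset.sum_congr rfl fun v _ => ?_
    rw [hT]; ring
  have key : (2:ℂ) * ∑ u, ∑ v, (((ν u : ℝ):ℂ) * ((ν v:ℝ):ℂ)) * T u v
      = (2:ℂ) * ((∑ u, ∑ v, ν u * ν v * (T u v).re : ℝ) : ℂ) := by
    rw [two_mul]; nth_rewrite 2 [h2]
    rw [← Finset.sum_add_distrib]
    push_cast
    rw [Finset.mul_sum]
    refine Finset.sum_congr rfl fun u _ => ?_
    rw [← Finset.sum_add_distrib, Finset.mul_sum]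
    refine Finset.sum_congr rfl fun v _ => ?_
    rw [← mul_add, Complex.add_conj]
    push_cast; ring
  exact mul_left_cancel₀ two_ne_zero key

/-- The off-grid objective `L(ν)` is real-valued and equals the quadratic form
`νᵀ H ν − 2 zᵀ ν + L(0)`, with `H` and `z` as in the SBLMC off-grid update `ν = H⁻¹z`. -/
theorem sblmc_offgrid_quadratic (m U P : ℕ) (hm : 1 ≤ m) (hU : 1 ≤ U) (hP : 1 ≤ P)
    (Ψ Ξ : Matrix (Fin m) (Fin U × Fin m) ℂ) (c : Fin m → ℂ)
    (r : Fin P → Fin m → ℂ) (μ : Fin P → Fin U → ℂ)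
    (Sx : Matrix (Fin U) (Fin U) ℂ) (hSx : Sx.IsHermitian)
    (Ψb Ξb : Fin U → Matrix (Fin m) (Fin m) ℂ)
    (hΨb : ∀ (u : Fin U) (i j : Fin m), Ψb u i j = Ψ i (u, j))
    (hΞb : ∀ (u : Fin U) (i j : Fin m), Ξb u i j = Ξ i (u, j))
    (IUc : Matrix (Fin U × Fin m) (Fin U) ℂ)
    (hIUc : ∀ (i : Fin U × Fin m) (j : Fin U), IUc i j = (if i.1 = j then 1 else 0) * c i.2)
    (Y : (Fin U → ℝ) → Matrix (Fin m) (Fin U × Fin m) ℂ)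
    (hY : ∀ ν, Y ν = Ψ + Ξ * Matrix.of (fun i j : Fin U × Fin m =>
        (if i.1 = j.1 then ((ν i.1 : ℝ) : ℂ) else 0) * (if i.2 = j.2 then 1 else 0)))
    (L : (Fin U → ℝ) → ℂ)
    (hL : ∀ ν, L ν = (∑ p, star (r p - (Y ν).mulVec fun i => μ p i.1 * c i.2) ⬝ᵥ
          (r p - (Y ν).mulVec fun i => μ p i.1 * c i.2)) +
        (P : ℂ) * (IUcᴴ * (Y ν)ᴴ * (Y ν) * IUc * Sx).trace)
    (H : Matrix (Fin U) (Fin U) ℝ)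
    (hH : ∀ u m', H u m' = (((P : ℂ) * Sx u m' + ∑ p, starRingEnd ℂ (μ p m') * μ p u) *
        (star c ⬝ᵥ ((Ξb m')ᴴ * Ξb u).mulVec c)).re)
    (z : Fin U → ℝ)
    (hz : ∀ u, z u = (∑ p, (star (r p - Ψ.mulVec fun i => μ p i.1 * c i.2) ⬝ᵥ
          (μ p u • (Ξb u).mulVec c)).re) -
        ∑ m', ((P : ℂ) * Sx u m' * (star c ⬝ᵥ ((Ψb m')ᴴ * Ξb u).mulVec c)).re) :
    (∀ ν, (L ν).im = 0) ∧
      ∀ ν : Fin U → ℝ, L ν = ((ν ⬝ᵥ H.mulVec ν : ℝ) : ℂ) - 2 * ((z ⬝ᵥ ν : ℝ) : ℂ) + L 0 := by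
  -- abbreviations
  have hSx' : ∀ u v, (starRingEnd ℂ) (Sx u v) = Sx v u := by
    intro u v
    conv_rhs => rw [← hSx]
    rfl
  set av : Fin U → Fin m → ℂ := fun u => (Ψb u).mulVec c with hav
  set bv : Fin U → Fin m → ℂ := fun u => (Ξb u).mulVec c with hbv
  set ev : Fin P → Fin m → ℂ := fun p => r p - Ψ.mulVec (fun i => μ p i.1 * c i.2) with hev
  have hxp : ∀ (ν : Fin U → ℝ) (p : Fin P),
      r p - (Y ν).mulVec (fun i => μ p i.1 * c i.2)
      = ev p - ∑ u, (((ν u : ℝ):ℂ) * μ p u) • bv u := by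
    intro ν p
    rw [hY, Matrix.add_mulVec, diag_mulVec]
    have hfun : (fun i : Fin U × Fin m => ((ν i.1 : ℝ):ℂ) * (μ p i.1 * c i.2))
        = fun i : Fin U × Fin m => (((ν i.1 : ℝ):ℂ) * μ p i.1) * c i.2 := by
      funext i; ring
    rw [hfun, block_mulVec Ξ Ξb hΞb c (fun u => ((ν u : ℝ):ℂ) * μ p u), sub_add_eq_sub_sub]
  have htr : ∀ ν : Fin U → ℝ, (IUcᴴ * (Y ν)ᴴ * (Y ν) * IUc * Sx).trace
      = ∑ u, ∑ w, Sx w u * (star (av u + ((ν u : ℝ):ℂ) • bv u) ⬝ᵥ (av w + ((ν w : ℝ):ℂ) • bv w)) := by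
    intro ν
    have h1 : IUcᴴ * (Y ν)ᴴ * (Y ν) * IUc * Sx = ((Y ν * IUc)ᴴ) * (Y ν * IUc) * Sx := by
      simp only [conjTranspose_mul, Matrix.mul_assoc]
    rw [h1, hY, prod_IUc Ψ Ξ c ν Ψb Ξb hΨb hΞb IUc hIUc, trace_gram]
    refine Finset.sum_congr rfl fun u _ => Finset.sum_congr rfl fun w _ => ?_
    have hv : ∀ x : Fin U,
        (fun i => Matrix.of (fun i u => av u i + ((ν u : ℝ):ℂ) * bv u i) i x)
        = av x + ((ν x : ℝ):ℂ) • bv x := by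
      intro x; funext i
      simp [Pi.add_apply, Pi.smul_apply, smul_eq_mul]
    rw [hv u, hv w]
  have hL0 : L 0 = (∑ p, star (ev p) ⬝ᵥ ev p)
      + (P:ℂ) * ∑ u, ∑ w, Sx w u * (star (av u) ⬝ᵥ av w) := by
    rw [hL 0]
    congr 1
    · refine Finset.sum_congr rfl fun p _ => ?_
      rw [hxp 0 p]
      simp
    · rw [htr 0]
      simp
  have hmain : ∀ ν : Fin U → ℝ,
      L ν = ((ν ⬝ᵥ H.mulVec ν : ℝ) : ℂ) - 2 * ((z ⬝ᵥ ν : ℝ) : ℂ) + L 0 := by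
    intro ν
    rw [hL ν]
    simp only [hxp ν, htr ν]
    rw [core av bv ev μ Sx hSx' ν]
    -- linear part
    have hzu : ∀ u, z u = ((∑ p, μ p u * (star (ev p) ⬝ᵥ bv u))
        - (P:ℂ) * ∑ v, Sx u v * (star (av v) ⬝ᵥ bv u)).re := by
      intro u
      rw [hz u, Complex.sub_re]
      congr 1
      · rw [Complex.re_sum]
        refine Finset.sum_congr rfl fun p _ => ?_
        rw [dotProduct_smul]
        rfl
      · rw [Finset.mul_sum, Complex.re_sum]
        refine Finset.sum_congr rfl fun v _ => ?_
        rw [adjoint_dot, mul_assoc]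
    have hlin : ∑ u, ((ν u : ℝ):ℂ) * (((∑ p, μ p u * (star (ev p) ⬝ᵥ bv u))
          - (P:ℂ) * ∑ v, Sx u v * (star (av v) ⬝ᵥ bv u))
        + (starRingEnd ℂ) ((∑ p, μ p u * (star (ev p) ⬝ᵥ bv u))
          - (P:ℂ) * ∑ v, Sx u v * (star (av v) ⬝ᵥ bv u)))
        = 2 * ((z ⬝ᵥ ν : ℝ) : ℂ) := by
      have : ∀ u : Fin U, ((∑ p, μ p u * (star (ev p) ⬝ᵥ bv u))
          - (P:ℂ) * ∑ v, Sx u v * (star (av v) ⬝ᵥ bv u))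
        + (starRingEnd ℂ) ((∑ p, μ p u * (star (ev p) ⬝ᵥ bv u))
          - (P:ℂ) * ∑ v, Sx u v * (star (av v) ⬝ᵥ bv u)) = 2 * ((z u : ℝ):ℂ) := by
        intro u
        rw [Complex.add_conj, hzu u]
        push_cast; ring
      rw [Finset.sum_congr rfl fun u _ => by rw [this u]]
      rw [dotProduct]
      push_cast
      rw [Finset.mul_sum]
      refine Finset.sum_congr rfl fun u _ => by ring
    have hTsym : ∀ u v, (starRingEnd ℂ)
        (((P:ℂ) * Sx u v + ∑ p, (starRingEnd ℂ) (μ p v) * μ p u) * (star (bv v) ⬝ᵥ bv u))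
        = ((P:ℂ) * Sx v u + ∑ p, (starRingEnd ℂ) (μ p u) * μ p v) * (star (bv u) ⬝ᵥ bv v) := by
      intro u v
      rw [_root_.map_mul, map_add, _root_.map_mul, map_sum, conj_dot, Complex.conj_natCast, hSx']
      congr 2
      refine Finset.sum_congr rfl fun p _ => ?_
      rw [_root_.map_mul, Complex.conj_conj]
      ring
    have hquad : ∑ u, ∑ v, (((ν u : ℝ):ℂ) * ((ν v : ℝ):ℂ)) *
          (((P:ℂ) * Sx u v + ∑ p, (starRingEnd ℂ) (μ p v) * μ p u) * (star (bv v) ⬝ᵥ bv u))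
        = ((ν ⬝ᵥ H.mulVec ν : ℝ) : ℂ) := by
      rw [quad_real _ hTsym ν]
      congr 1
      rw [dotProduct]
      refine Finset.sum_congr rfl fun u _ => ?_
      rw [mulVec, dotProduct, Finset.mul_sum]
      refine Finset.sum_congr rfl fun v _ => ?_
      rw [hH u v, adjoint_dot]
      ring
    rw [hlin, hquad, ← hL0]
    ring
  refine ⟨?_, hmain⟩
  -- real-valuedness
  have hE0 : (L 0).im = 0 := by
    rw [hL0, Complex.add_im]
    have h1 : (∑ p, star (ev p) ⬝ᵥ ev p).im = 0 := by
      have h : (starRingEnd ℂ) (∑ p, star (ev p) ⬝ᵥ ev p) = ∑ p, star (ev p) ⬝ᵥ ev p := by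
        rw [map_sum]
        exact Finset.sum_congr rfl fun p _ => conj_dot _ _
      exact Complex.conj_eq_iff_im.mp h
    have h2 : (∑ u, ∑ w, Sx w u * (star (av u) ⬝ᵥ av w)).im = 0 := by
      apply selfconj_im
      intro u w
      rw [_root_.map_mul, hSx', conj_dot]
    rw [h1, Complex.mul_im, h2]
    simp
  intro ν
  rw [hmain ν]
  simp [Complex.add_im, Complex.sub_im, Complex.mul_im, hE0]
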